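/- Let A be an invertible m×m real matrix and let I = (i_1,…,i_r), J = (j_1,…,j_r) be sequences in {1,…,m}. Then (∏_{i=1}^m ∂_{ψ̄_i}∂_{ψ_i}) [ψ_{i_1}ψ̄_{j_1}ψ_{i_2}ψ̄_{j_2}⋯ψ_{i_r}ψ̄_{j_r}] exp(∑_{i,j=1}^m ψ_i A_{ij} ψ̄_j) = det(A) · det(N), where N is the r×r matrix with entries N(α,β) = (A^{−⊤})(i_α, j_β) = (A^{−1})(j_β, i_α). (Wick's theorem for 'complex' fermions, item 1.) -/

import Mathlib

/-!
Grassmann algebra Ω_m realized as the exterior algebra of ℝ^{2m}, with generators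
ψ_1,…,ψ_m (indexed by `Sum.inl`) and ψ̄_1,…,ψ̄_m (indexed by `Sum.inr`).
The left derivative ∂_ξ is contraction with the corresponding dual-basis functional,
the Berezin integral is the composition ∂_{ψ̄_1}∂_{ψ_1}⋯∂_{ψ̄_m}∂_{ψ_m}, and
exp(F) = ∑_{k≥0} F^k/k! (a finite sum by nilpotency, here a `finsum`).
-/

set_option maxHeartbeats 1000000
set_option synthInstance.maxHeartbeats 400000

noncomputable section

namespace Fermion

/-- The Grassmann algebra with `2m` generators. -/
abbrev Gr (m : ℕ) := ExteriorAlgebra ℝ ((Fin m ⊕ Fin m) → ℝ)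

/-- The generator `ψ_i`. -/
def psi {m : ℕ} (i : Fin m) : Gr m :=
  ExteriorAlgebra.ι ℝ (Pi.single (Sum.inl i) 1)

/-- The generator `ψ̄_i`. -/
def psibar {m : ℕ} (i : Fin m) : Gr m :=
  ExteriorAlgebra.ι ℝ (Pi.single (Sum.inr i) 1)

/-- The left derivative with respect to the generator indexed by `x`, realized as
contraction with the dual-basis functional of that generator. -/
def der {m : ℕ} (x : Fin m ⊕ Fin m) : Module.End ℝ (Gr m) :=
  CliffordAlgebra.contractLeft (LinearMap.proj x)

/-- The Berezin integral `(∏_{i=1}^m ∂_{ψ̄_i}∂_{ψ_i})`.  The operators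
`∂_{ψ̄_i}∂_{ψ_i}` pairwise commute, so the order of composition is immaterial. -/
def berezin (m : ℕ) : Module.End ℝ (Gr m) :=
  ((List.finRange m).map (fun i => der (Sum.inr i) * der (Sum.inl i))).prod

/-- `exp` of a Grassmann element: `∑_{k≥0} F^k/k!`, a finite sum for nilpotent `F`. -/
def gexp {m : ℕ} (F : Gr m) : Gr m := ∑ᶠ k : ℕ, (k.factorial : ℝ)⁻¹ • F ^ k


variable {m : ℕ}

/-- generator of Gr indexed by x -/
def gen (x : Fin m ⊕ Fin m) : Gr m := ExteriorAlgebra.ι ℝ (Pi.single x 1)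

lemma psi_eq (i : Fin m) : psi i = gen (Sum.inl i) := rfl
lemma psibar_eq (i : Fin m) : psibar i = gen (Sum.inr i) := rfl

lemma gen_anticomm (x y : Fin m ⊕ Fin m) : gen x * gen y = -(gen y * gen x) := by
  have h := ExteriorAlgebra.ι_add_mul_swap (R := ℝ)
    (Pi.single x 1 : (Fin m ⊕ Fin m) → ℝ) (Pi.single y 1)
  unfold gen
  rw [eq_neg_iff_add_eq_zero]
  exact h

lemma gen_sq (x : Fin m ⊕ Fin m) : gen x * gen x = 0 := ExteriorAlgebra.ι_sq_zero _


lemma gen_gen_central (x y : Fin m ⊕ Fin m) (z : Gr m) :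
    Commute (gen x * gen y) z := by
  induction z using CliffordAlgebra.induction with
  | algebraMap r => exact (Algebra.commutes r _).symm
  | ι v =>
      have h1 : gen y * ExteriorAlgebra.ι ℝ v = -(ExteriorAlgebra.ι ℝ v * gen y) := by
        rw [eq_neg_iff_add_eq_zero, add_comm]; exact ExteriorAlgebra.ι_add_mul_swap _ _
      have h2 : gen x * ExteriorAlgebra.ι ℝ v = -(ExteriorAlgebra.ι ℝ v * gen x) := by
        rw [eq_neg_iff_add_eq_zero, add_comm]; exact ExteriorAlgebra.ι_add_mul_swap _ _
      show gen x * gen y * ExteriorAlgebra.ι ℝ v = ExteriorAlgebra.ι ℝ v * (gen x * gen y)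
      rw [mul_assoc, h1, mul_neg, ← mul_assoc, h2, neg_mul, neg_neg, mul_assoc]
  | mul a b ha hb => exact ha.mul_right hb
  | add a b ha hb => exact ha.add_right hb

/-- The quadratic element ψ_i ψ̄_j. -/
def q (i j : Fin m) : Gr m := psi i * psibar j

lemma q_central (i j : Fin m) (z : Gr m) : Commute (q i j) z :=
  gen_gen_central _ _ z

lemma gen4_left (x y z : Fin m ⊕ Fin m) :
    (gen x * gen y) * (gen x * gen z) = 0 := by
  rw [mul_assoc, ← mul_assoc (gen y), gen_anticomm y x, neg_mul, mul_neg,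
    ← mul_assoc, ← mul_assoc, gen_sq, zero_mul, zero_mul, neg_zero]

lemma gen4_right (x y z : Fin m ⊕ Fin m) :
    (gen x * gen y) * (gen z * gen y) = 0 := by
  rw [mul_assoc, ← mul_assoc (gen y), gen_anticomm y z, neg_mul, mul_neg,
    mul_assoc (gen z), gen_sq, mul_zero, mul_zero, neg_zero]

lemma q_mul_q_left (i j l : Fin m) : q i j * q i l = 0 := gen4_left _ _ _
lemma q_mul_q_right (i j k : Fin m) : q i j * q k j = 0 := gen4_right _ _ _
lemma q_sq (i j : Fin m) : q i j * q i j = 0 := q_mul_q_left i j j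

lemma q_swap (a b x y : Fin m) : q a x * q b y = -(q a y * q b x) := by
  unfold q psi psibar
  show (gen _ * gen _) * (gen _ * gen _) = -((gen _ * gen _) * (gen _ * gen _))
  have key : ∀ u v w t : Fin m ⊕ Fin m,
      (gen u * gen v) * (gen w * gen t) = -((gen u * gen w) * (gen v * gen t)) := by
    intro u v w t
    rw [mul_assoc, ← mul_assoc (gen v), gen_anticomm v w, neg_mul, mul_neg,
      ← mul_assoc, ← mul_assoc, ← neg_mul, ← mul_assoc, neg_mul]
  rw [key, key (Sum.inl a) (Sum.inr y) (Sum.inl b) (Sum.inr x)]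
  rw [gen_anticomm (Sum.inr y) (Sum.inr x)]
  simp [mul_neg, neg_mul]


lemma der_gen_mul (x y : Fin m ⊕ Fin m) (w : Gr m) :
    der x (gen y * w) = (if x = y then (1:ℝ) else 0) • w - gen y * der x w := by
  have h := CliffordAlgebra.contractLeft_ι_mul (Q := (0 : QuadraticForm ℝ ((Fin m ⊕ Fin m) → ℝ)))
    (LinearMap.proj x) (Pi.single y (1:ℝ)) w
  simpa [der, gen, Pi.single_apply] using h

lemma der_gen_mul_same (x : Fin m ⊕ Fin m) (w : Gr m) :
    der x (gen x * w) = w - gen x * der x w := by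
  simp [der_gen_mul]

lemma der_gen_mul_ne {x y : Fin m ⊕ Fin m} (h : y ≠ x) (w : Gr m) :
    der x (gen y * w) = -(gen y * der x w) := by
  simp [der_gen_mul, Ne.symm h]

lemma der_one (x : Fin m ⊕ Fin m) : der x (1 : Gr m) = 0 :=
  CliffordAlgebra.contractLeft_one _ _

lemma der_algebraMap (x : Fin m ⊕ Fin m) (r : ℝ) :
    der x (algebraMap ℝ (Gr m) r) = 0 :=
  CliffordAlgebra.contractLeft_algebraMap _ _ _

lemma der_der_comm (x y : Fin m ⊕ Fin m) (w : Gr m) :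
    der x (der y w) = -(der y (der x w)) :=
  CliffordAlgebra.contractLeft_comm _ _ _

lemma der_q_mul {x : Fin m ⊕ Fin m} {a b : Fin m} (ha : x ≠ Sum.inl a)
    (hb : x ≠ Sum.inr b) (w : Gr m) :
    der x (q a b * w) = q a b * der x w := by
  unfold q
  rw [psi_eq, psibar_eq, mul_assoc,
    der_gen_mul_ne (fun h => ha h.symm),
    der_gen_mul_ne (fun h => hb h.symm), mul_neg, neg_neg, mul_assoc]


def BZ (L : List (Fin m)) : Module.End ℝ (Gr m) :=
  (L.map (fun i => der (Sum.inr i) * der (Sum.inl i))).prod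

lemma berezin_eq_BZ : berezin m = BZ (List.finRange m) := rfl

lemma BZ_cons (i : Fin m) (L : List (Fin m)) (w : Gr m) :
    BZ (i :: L) w = der (Sum.inr i) (der (Sum.inl i) (BZ L w)) := by
  simp [BZ, List.prod_cons, Module.End.mul_apply]

lemma der_BZ (L : List (Fin m)) (x : Fin m ⊕ Fin m) (w : Gr m) :
    der x (BZ L w) = BZ L (der x w) := by
  induction L generalizing w with
  | nil => rfl
  | cons i L ih =>
    rw [BZ_cons, BZ_cons, der_der_comm x (Sum.inr i), der_der_comm x (Sum.inl i), map_neg,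
      neg_neg, ih]

lemma BZ_kill {L : List (Fin m)} {w : Gr m} {i : Fin m} (hi : i ∈ L)
    (h : der (Sum.inl i) w = 0 ∨ der (Sum.inr i) w = 0) : BZ L w = 0 := by
  induction L with
  | nil => simp at hi
  | cons j L ih =>
    rw [BZ_cons]
    rcases List.mem_cons.mp hi with rfl | hi'
    · rcases h with h | h
      · rw [der_BZ, h, map_zero, map_zero]
      · rw [der_der_comm, der_BZ, h, map_zero, map_zero, neg_zero]
    · rw [ih hi', map_zero, map_zero]

lemma BZ_top (L : List (Fin m)) (hL : L.Nodup) (w : Gr m)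
    (h : ∀ i ∈ L, der (Sum.inl i) w = 0 ∧ der (Sum.inr i) w = 0) :
    BZ L (((L.map (fun i => q i i)).prod) * w) = w := by
  induction L generalizing w with
  | nil => simp [BZ]
  | cons i L ih =>
    obtain ⟨hiL, hLnd⟩ := List.nodup_cons.mp hL
    have hi := h i List.mem_cons_self
    have hq : ((i :: L).map (fun i => q i i)).prod * w
        = (L.map (fun i => q i i)).prod * (q i i * w) := by
      rw [List.map_cons, List.prod_cons, mul_assoc, (q_central i i _).eq, mul_assoc,
        ← (q_central i i w).eq]
    have h' : ∀ j ∈ L, der (Sum.inl j) (q i i * w) = 0 ∧ der (Sum.inr j) (q i i * w) = 0 := by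
      intro j hj
      have hji : j ≠ i := fun e => hiL (e ▸ hj)
      refine ⟨?_, ?_⟩
      · rw [der_q_mul (by simp [hji]) (by simp), (h j (List.mem_cons_of_mem _ hj)).1, mul_zero]
      · rw [der_q_mul (by simp) (by simp [hji]), (h j (List.mem_cons_of_mem _ hj)).2, mul_zero]
    rw [hq, BZ_cons, ih hLnd _ h']
    have e1 : der (Sum.inl i) (q i i * w) = gen (Sum.inr i) * w := by
      unfold q
      rw [psi_eq, psibar_eq, mul_assoc, der_gen_mul_same,
        der_gen_mul_ne (by simp : (Sum.inr i : Fin m ⊕ Fin m) ≠ Sum.inl i), hi.1,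
        mul_zero, neg_zero, mul_zero, sub_zero]
    rw [e1, der_gen_mul_same, hi.2, mul_zero, sub_zero]

lemma berezin_top : berezin m (((List.finRange m).map (fun i => q i i)).prod) = 1 := by
  have h := BZ_top (List.finRange m) (List.nodup_finRange m) (1 : Gr m)
    (fun i _ => ⟨der_one _, der_one _⟩)
  rw [mul_one] at h
  rw [berezin_eq_BZ, h]


/-- The center of the Grassmann algebra. -/
abbrev Ce (m : ℕ) : Subalgebra ℝ (Gr m) := Subalgebra.center ℝ (Gr m)

set_option synthInstance.maxHeartbeats 1000000 in
instance instCeCommRing : CommRing (Ce m) := inferInstance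
set_option synthInstance.maxHeartbeats 1000000 in
instance instCeAlgebra : Algebra ℝ (Ce m) := inferInstance
set_option synthInstance.maxHeartbeats 1000000 in
instance instCeACM : AddCommMonoid (Ce m) := inferInstance
set_option synthInstance.maxHeartbeats 1000000 in
instance instCeModule : Module ℝ (Ce m) := inferInstance

def qc (i j : Fin m) : Ce m :=
  ⟨q i j, Subalgebra.mem_center_iff.mpr fun b => ((q_central i j b).eq).symm⟩

@[simp] lemma qc_coe (i j : Fin m) : ((qc i j : Ce m) : Gr m) = q i j := rfl

lemma coe_list_prod (l : List (Ce m)) :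
    ((l.prod : Ce m) : Gr m) = (l.map (fun x : Ce m => (x : Gr m))).prod := by
  simpa using map_list_prod ((Ce m).val) l

lemma coe_prod_univ {n : ℕ} (f : Fin n → Ce m) :
    ((∏ i, f i : Ce m) : Gr m)
      = ((List.finRange n).map (fun i => ((f i : Ce m) : Gr m))).prod := by
  rw [Fin.prod_univ_def, coe_list_prod, List.map_map]
  rfl

lemma qc_swap (a b x y : Fin m) : qc a x * qc b y = -(qc a y * qc b x) := by
  apply Subtype.ext
  simpa using q_swap a b x y

lemma qc_mul_left_zero (i j l : Fin m) : qc i j * qc i l = 0 :=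
  Subtype.ext (by simpa using q_mul_q_left i j l)
lemma qc_mul_right_zero (i j k : Fin m) : qc i j * qc k j = 0 :=
  Subtype.ext (by simpa using q_mul_q_right i j k)
lemma qc_sq (i j : Fin m) : qc i j * qc i j = 0 := qc_mul_left_zero i j j

lemma prod_qc_perm (σ : Equiv.Perm (Fin m)) :
    (∏ i, qc i (σ i))
      = algebraMap ℝ (Ce m) ((Equiv.Perm.sign σ : ℤ) : ℝ) * ∏ i, qc i i := by
  refine Equiv.Perm.swap_induction_on σ (by simp) ?_
  intro f x y hxy hf
  have hab : f⁻¹ x ≠ f⁻¹ y := fun e => hxy (by simpa using congrArg f e)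
  have hb' : f⁻¹ y ∈ Finset.univ.erase (f⁻¹ x) :=
    Finset.mem_erase.mpr ⟨hab.symm, Finset.mem_univ _⟩
  have e1 : (Equiv.swap x y * f) (f⁻¹ x) = y := by simp [Equiv.Perm.mul_apply]
  have e2 : (Equiv.swap x y * f) (f⁻¹ y) = x := by simp [Equiv.Perm.mul_apply]
  have e3 : ∀ i ∈ (Finset.univ.erase (f⁻¹ x)).erase (f⁻¹ y),
      qc i ((Equiv.swap x y * f) i) = qc i (f i) := by
    intro i hi
    obtain ⟨h1, h2⟩ := Finset.mem_erase.mp hi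
    have h3 := (Finset.mem_erase.mp h2).1
    rw [Equiv.Perm.mul_apply, Equiv.swap_apply_of_ne_of_ne]
    · intro e; exact h3 (by rw [← e]; simp)
    · intro e; exact h1 (by rw [← e]; simp)
  have key : (∏ i, qc i ((Equiv.swap x y * f) i)) = -∏ i, qc i (f i) := by
    calc ∏ i, qc i ((Equiv.swap x y * f) i)
        = qc (f⁻¹ x) y * (qc (f⁻¹ y) x *
            ∏ i ∈ (Finset.univ.erase (f⁻¹ x)).erase (f⁻¹ y), qc i (f i)) := by
          rw [← Finset.mul_prod_erase Finset.univ _ (Finset.mem_univ (f⁻¹ x)),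
              ← Finset.mul_prod_erase _ _ hb', Finset.prod_congr rfl e3, e1, e2]
      _ = -(qc (f⁻¹ x) x * (qc (f⁻¹ y) y *
            ∏ i ∈ (Finset.univ.erase (f⁻¹ x)).erase (f⁻¹ y), qc i (f i))) := by
          rw [← mul_assoc, qc_swap (f⁻¹ x) (f⁻¹ y) y x]; exact (neg_mul _ _).trans (congrArg _ (mul_assoc _ _ _))
      _ = -∏ i, qc i (f i) := by
          rw [← Finset.mul_prod_erase Finset.univ (fun i => qc i (f i))
                (Finset.mem_univ (f⁻¹ x)),
              ← Finset.mul_prod_erase _ _ hb', (by exact Equiv.apply_symm_apply f x : f (f⁻¹ x) = x),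
              (by exact Equiv.apply_symm_apply f y : f (f⁻¹ y) = y)]
  rw [key, hf]
  simp only [Equiv.Perm.sign_mul, Equiv.Perm.sign_swap hxy]
  push_cast
  simp [map_neg, map_mul, neg_mul, neg_one_mul]
  exact (neg_one_mul _).symm.trans (mul_assoc _ _ _).symm


lemma der_coe_prod_qc (x : Fin m ⊕ Fin m) (S : Finset (Fin m × Fin m))
    (hx : ∀ p ∈ S, x ≠ Sum.inl p.1 ∧ x ≠ Sum.inr p.2) :
    der x ((∏ p ∈ S, qc p.1 p.2 : Ce m) : Gr m) = 0 := by
  classical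
  induction S using Finset.induction_on with
  | empty => simpa using der_one x
  | insert _ _ ha ih =>
    rename_i p S
    rw [Finset.prod_insert ha]
    have : (((qc p.1 p.2 * ∏ p ∈ S, qc p.1 p.2 : Ce m)) : Gr m)
        = q p.1 p.2 * ((∏ p ∈ S, qc p.1 p.2 : Ce m) : Gr m) := rfl
    rw [this, der_q_mul (hx p (Finset.mem_insert_self p S)).1
        (hx p (Finset.mem_insert_self p S)).2,
      ih (fun p hp => hx p (Finset.mem_insert_of_mem hp)), mul_zero]

def permGraph (σ : Equiv.Perm (Fin m)) : Finset (Fin m × Fin m) :=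
  Finset.univ.image (fun i => (i, σ i))

lemma berezin_prod_qc_graph (σ : Equiv.Perm (Fin m)) :
    berezin m ((∏ p ∈ permGraph σ, qc p.1 p.2 : Ce m) : Gr m)
      = algebraMap ℝ (Gr m) ((Equiv.Perm.sign σ : ℤ) : ℝ) := by
  have hinj : Function.Injective (fun i : Fin m => (i, σ i)) :=
    fun a b h => congrArg Prod.fst h
  rw [permGraph, Finset.prod_image (fun a _ b _ h => hinj h)]
  have : (∏ i : Fin m, qc (i, σ i).1 (i, σ i).2) = ∏ i : Fin m, qc i (σ i) := rfl
  rw [this, prod_qc_perm]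
  have coemul : ((algebraMap ℝ (Ce m) ((Equiv.Perm.sign σ : ℤ) : ℝ) * ∏ i, qc i i : Ce m) : Gr m)
      = algebraMap ℝ (Gr m) ((Equiv.Perm.sign σ : ℤ) : ℝ) * ((∏ i, qc i i : Ce m) : Gr m) := rfl
  rw [coemul, ← Algebra.smul_def, map_smul, coe_prod_univ]
  have : (fun i => ((qc i i : Ce m) : Gr m)) = fun i => q i i := rfl
  rw [this, berezin_top, Algebra.algebraMap_eq_smul_one]

lemma berezin_prod_qc_zero (S : Finset (Fin m × Fin m))
    (hS : ∀ σ : Equiv.Perm (Fin m), S ≠ permGraph σ) :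
    berezin m ((∏ p ∈ S, qc p.1 p.2 : Ce m) : Gr m) = 0 := by
  classical
  by_cases hrep : ∃ p ∈ S, ∃ p' ∈ S, p ≠ p' ∧ (p.1 = p'.1 ∨ p.2 = p'.2)
  · obtain ⟨p, hp, p', hp', hne, hco⟩ := hrep
    have hzero : (∏ p ∈ S, qc p.1 p.2 : Ce m) = 0 := by
      rw [← Finset.mul_prod_erase S _ hp,
        ← Finset.mul_prod_erase _ _ (Finset.mem_erase.mpr ⟨hne.symm, hp'⟩), ← mul_assoc]
      have h2 : qc p.1 p.2 * qc p'.1 p'.2 = 0 := by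
        rcases hco with h | h
        · rw [← h]; exact qc_mul_left_zero _ _ _
        · rw [← h]; exact qc_mul_right_zero _ _ _
      rw [h2, zero_mul]
    rw [hzero]
    simpa using map_zero (berezin m)
  · push_neg at hrep
    by_cases himg : S.image Prod.fst = Finset.univ
    · exfalso
      have hex : ∀ i : Fin m, ∃ j, (i, j) ∈ S := by
        intro i
        have hmem : i ∈ S.image Prod.fst := himg ▸ Finset.mem_univ i
        obtain ⟨p, hp, he⟩ := Finset.mem_image.mp hmem
        exact ⟨p.2, by rwa [show (i, p.2) = p from Prod.ext he.symm rfl]⟩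
      choose g hg using hex
      have ginj : Function.Injective g := by
        intro a b hab
        by_contra hne
        have hpairs : (a, g a) ≠ (b, g b) := fun e => hne (congrArg Prod.fst e)
        exact (hrep (a, g a) (hg a) (b, g b) (hg b) hpairs).2 hab
      have gbij := Finite.injective_iff_bijective.mp ginj
      let σ := Equiv.ofBijective g gbij
      apply hS σ
      ext p
      constructor
      · intro hp
        have hp2 : p.2 = g p.1 := by
          by_contra hne
          have hpairs : p ≠ (p.1, g p.1) := fun e => hne (congrArg Prod.snd e)
          exact (hrep p hp (p.1, g p.1) (hg p.1) hpairs).1 rfl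
        refine Finset.mem_image.mpr ⟨p.1, Finset.mem_univ _, ?_⟩
        exact Prod.ext rfl hp2.symm
      · intro hp
        obtain ⟨i, -, he⟩ := Finset.mem_image.mp hp
        rw [← he]
        exact hg i
    · obtain ⟨i, hi⟩ : ∃ i, i ∉ S.image Prod.fst := by
        by_contra h
        push_neg at h
        exact himg (Finset.eq_univ_iff_forall.mpr h)
      rw [berezin_eq_BZ]
      refine BZ_kill (List.mem_finRange i) (Or.inl ?_)
      apply der_coe_prod_qc
      intro p hp
      refine ⟨?_, by simp⟩
      intro e
      exact hi (Finset.mem_image.mpr ⟨p, hp, (Sum.inl.injEq .. ▸ e : i = p.1).symm⟩)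


lemma smul_prod_qc (S : Finset (Fin m × Fin m)) (B : Matrix (Fin m) (Fin m) ℝ) :
    (∏ p ∈ S, (B p.1 p.2 • qc p.1 p.2 : Ce m))
      = algebraMap ℝ (Ce m) (∏ p ∈ S, B p.1 p.2) * ∏ p ∈ S, qc p.1 p.2 := by
  rw [map_prod, ← Finset.prod_mul_distrib]
  exact Finset.prod_congr rfl fun p _ => Algebra.smul_def _ _

lemma berezin_gexp_core (B : Matrix (Fin m) (Fin m) ℝ) :
    berezin m ((∏ p : Fin m × Fin m, ((1 : Ce m) + B p.1 p.2 • qc p.1 p.2) : Ce m) : Gr m)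
      = algebraMap ℝ (Gr m) B.det := by
  classical
  have expand : (∏ p : Fin m × Fin m, ((1 : Ce m) + B p.1 p.2 • qc p.1 p.2))
      = ∑ S ∈ (Finset.univ : Finset (Fin m × Fin m)).powerset,
          algebraMap ℝ (Ce m) (∏ p ∈ S, B p.1 p.2) * ∏ p ∈ S, qc p.1 p.2 := by
    have hcomm : ∀ p : Fin m × Fin m, (1 : Ce m) + B p.1 p.2 • qc p.1 p.2
        = (B p.1 p.2 • qc p.1 p.2) + 1 := fun p => add_comm _ _
    rw [Finset.prod_congr rfl (fun p _ => hcomm p), Finset.prod_add]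
    refine Finset.sum_congr rfl fun S hS => ?_
    rw [Finset.prod_const_one, mul_one, smul_prod_qc]
  rw [expand]
  have coe_eq : (((∑ S ∈ (Finset.univ : Finset (Fin m × Fin m)).powerset,
        algebraMap ℝ (Ce m) (∏ p ∈ S, B p.1 p.2) * ∏ p ∈ S, qc p.1 p.2 : Ce m)) : Gr m)
      = ∑ S ∈ (Finset.univ : Finset (Fin m × Fin m)).powerset,
          (∏ p ∈ S, B p.1 p.2) • ((∏ p ∈ S, qc p.1 p.2 : Ce m) : Gr m) := by
    rw [AddSubmonoidClass.coe_finset_sum]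
    refine Finset.sum_congr rfl fun S _ => ?_
    rw [show (((algebraMap ℝ (Ce m) (∏ p ∈ S, B p.1 p.2) * ∏ p ∈ S, qc p.1 p.2 : Ce m)) : Gr m)
        = algebraMap ℝ (Gr m) (∏ p ∈ S, B p.1 p.2) * ((∏ p ∈ S, qc p.1 p.2 : Ce m) : Gr m)
        from rfl, ← Algebra.smul_def]
  rw [coe_eq, map_sum]
  simp_rw [map_smul]
  rw [← Finset.sum_filter_of_ne
      (p := fun S => ∃ σ : Equiv.Perm (Fin m), S = permGraph σ)
      (by
        intro S hS hne
        by_contra hnex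
        push_neg at hnex
        rw [berezin_prod_qc_zero S hnex, smul_zero] at hne
        exact hne rfl)]
  have hfilt : ((Finset.univ : Finset (Fin m × Fin m)).powerset.filter
        fun S => ∃ σ : Equiv.Perm (Fin m), S = permGraph σ)
      = Finset.univ.image permGraph := by
    ext S
    simp only [Finset.mem_filter, Finset.mem_powerset, Finset.subset_univ, true_and,
      Finset.mem_image, Finset.mem_univ, true_and]
    exact ⟨fun ⟨σ, h⟩ => ⟨σ, h.symm⟩, fun ⟨σ, h⟩ => ⟨σ, h.symm⟩⟩
  have hPG : ∀ σ ∈ (Finset.univ : Finset (Equiv.Perm (Fin m))),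
      ∀ τ ∈ (Finset.univ : Finset (Equiv.Perm (Fin m))),
      permGraph σ = permGraph τ → σ = τ := by
    intro σ _ τ _ h
    ext i
    have hmem : (i, σ i) ∈ permGraph τ := by
      rw [← h]; exact Finset.mem_image_of_mem _ (Finset.mem_univ i)
    obtain ⟨j, -, hj⟩ := Finset.mem_image.mp hmem
    have hji : j = i := congrArg Prod.fst hj
    have h2 : τ j = σ i := congrArg Prod.snd hj
    rw [hji] at h2
    exact congrArg _ h2.symm
  rw [hfilt, Finset.sum_image hPG]
  have hterm : ∀ σ : Equiv.Perm (Fin m),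
      (∏ p ∈ permGraph σ, B p.1 p.2) • berezin m ((∏ p ∈ permGraph σ, qc p.1 p.2 : Ce m) : Gr m)
      = algebraMap ℝ (Gr m) (((Equiv.Perm.sign σ : ℤ) : ℝ) * ∏ i, B i (σ i)) := by
    intro σ
    rw [berezin_prod_qc_graph, permGraph,
      Finset.prod_image (fun a _ b _ h => (congrArg Prod.fst h : a = b))]
    rw [Algebra.smul_def, ← map_mul]
    congr 1
    ring
  rw [Finset.sum_congr rfl (fun σ _ => hterm σ), ← map_sum]
  congr 1
  rw [← Matrix.det_transpose B, Matrix.det_apply']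
  refine Finset.sum_congr rfl fun σ _ => ?_
  congr 1


lemma gexp_eq_sum {x : Gr m} {N : ℕ} (h : x ^ N = 0) :
    gexp x = ∑ k ∈ Finset.range N, (k.factorial : ℝ)⁻¹ • x ^ k := by
  apply finsum_eq_finset_sum_of_support_subset
  intro k hk
  simp only [Function.mem_support] at hk
  simp only [Finset.coe_range, Set.mem_Iio]
  by_contra hkN
  push_neg at hkN
  apply hk
  have hxk : x ^ k = x ^ N * x ^ (k - N) := by
    rw [← pow_add, Nat.add_sub_cancel' hkN]
  rw [hxk, h, zero_mul, smul_zero]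

lemma gexp_zero : gexp (0 : Gr m) = 1 := by
  rw [gexp_eq_sum (N := 1) (by simp)]
  simp

lemma add_pow_sq_zero {c y : Gr m} (hc : c * c = 0) (hcy : Commute c y) (n : ℕ) :
    (c + y) ^ (n + 1) = y ^ (n + 1) + (n + 1) • (c * y ^ n) := by
  induction n with
  | zero => simp [add_comm]
  | succ n ih =>
    have h1 : y ^ (n+1) * c = c * y ^ (n+1) := ((hcy.pow_right (n+1)).eq).symm
    have h2 : c * y ^ n * c = 0 := by
      rw [mul_assoc, ← (hcy.pow_right n).eq, ← mul_assoc, hc, zero_mul]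
    rw [pow_succ, ih, add_mul, mul_add, mul_add, smul_mul_assoc, smul_mul_assoc, h2, smul_zero,
      zero_add, h1, ← pow_succ, mul_assoc, ← pow_succ]
    conv_rhs => rw [succ_nsmul]
    abel

lemma gexp_sq_zero_add {c y : Gr m} (hc : c * c = 0) (hcy : Commute c y)
    (hy : IsNilpotent y) : gexp (c + y) = (1 + c) * gexp y := by
  obtain ⟨b, hb⟩ := hy
  have hyb1 : y ^ (b + 1) = 0 := by rw [pow_succ, hb, zero_mul]
  have hcyb : (c + y) ^ (b + 1) = 0 := by
    rw [add_pow_sq_zero hc hcy b, hyb1, hb, mul_zero, smul_zero, add_zero]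
  rw [gexp_eq_sum hcyb, gexp_eq_sum hb,
    Finset.sum_range_succ' (fun k => (k.factorial : ℝ)⁻¹ • (c + y) ^ k) b]
  have hterm : ∀ k, ((k+1).factorial : ℝ)⁻¹ • (c + y) ^ (k + 1)
      = ((k+1).factorial : ℝ)⁻¹ • y ^ (k + 1) + (k.factorial : ℝ)⁻¹ • (c * y ^ k) := by
    intro k
    rw [add_pow_sq_zero hc hcy k, smul_add]
    congr 1
    rw [← Nat.cast_smul_eq_nsmul ℝ, smul_smul]
    congr 1
    rw [Nat.factorial_succ]
    have h1 : ((k : ℕ) : ℝ) + 1 ≠ 0 := by positivity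
    have h2 : ((k.factorial : ℕ) : ℝ) ≠ 0 := Nat.cast_ne_zero.mpr k.factorial_ne_zero
    push_cast
    field_simp
  rw [Finset.sum_congr rfl (fun k _ => hterm k), Finset.sum_add_distrib]
  have hcg : (∑ k ∈ Finset.range b, (k.factorial : ℝ)⁻¹ • (c * y ^ k))
      = c * ∑ k ∈ Finset.range b, (k.factorial : ℝ)⁻¹ • y ^ k := by
    rw [Finset.mul_sum]
    exact Finset.sum_congr rfl fun k _ => (mul_smul_comm _ _ _).symm
  have hgy : (∑ k ∈ Finset.range b, (k.factorial : ℝ)⁻¹ • y ^ k)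
      = (∑ k ∈ Finset.range b, ((k+1).factorial : ℝ)⁻¹ • y ^ (k+1)) + 1 := by
    have e1 := Finset.sum_range_succ (fun k => (k.factorial : ℝ)⁻¹ • y ^ k) b
    have e2 := Finset.sum_range_succ' (fun k => (k.factorial : ℝ)⁻¹ • y ^ k) b
    rw [hb, smul_zero, add_zero] at e1
    rw [← e1, e2]
    simp
  rw [hcg, add_mul, one_mul]
  simp only [pow_zero, Nat.factorial_zero, Nat.cast_one, inv_one, one_smul]
  nth_rewrite 2 [hgy]
  abel


lemma central_commute (x : Ce m) (y : Gr m) : Commute ((x : Ce m) : Gr m) y :=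
  (Subalgebra.mem_center_iff.mp x.2 y).symm

lemma coe_nilpotent {x : Ce m} (h : IsNilpotent x) : IsNilpotent ((x : Ce m) : Gr m) :=
  h.map ((Ce m).val)

lemma sq_zero_nilpotent {x : Ce m} (h : x * x = 0) : IsNilpotent x :=
  ⟨2, by rw [pow_two, h]⟩

lemma gexp_sum_shift {ι : Type*} [DecidableEq ι] (T : Finset ι) (c : ι → Ce m)
    (hc : ∀ s, c s * c s = 0) (y : Gr m) (hy : IsNilpotent y) :
    gexp (((∑ s ∈ T, c s : Ce m) : Gr m) + y)
      = ((∏ s ∈ T, (1 + c s) : Ce m) : Gr m) * gexp y := by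
  classical
  induction T using Finset.induction_on with
  | empty => simp
  | insert _ _ ha ih =>
    rename_i a T
    rw [Finset.sum_insert ha, Finset.prod_insert ha]
    have split : (((c a + ∑ s ∈ T, c s : Ce m) : Gr m) + y)
        = ((c a : Ce m) : Gr m) + (((∑ s ∈ T, c s : Ce m) : Gr m) + y) := by
      push_cast
      rw [add_assoc]
    have hnilsum : IsNilpotent (((∑ s ∈ T, c s : Ce m) : Gr m) + y) := by
      refine Commute.isNilpotent_add (central_commute _ _) ?_ hy
      exact coe_nilpotent (isNilpotent_sum fun s _ => sq_zero_nilpotent (hc s))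
    have hcsq : ((c a : Ce m) : Gr m) * ((c a : Ce m) : Gr m) = 0 := by
      have := congrArg (Subtype.val) (hc a)
      simpa using this
    rw [split, gexp_sq_zero_add hcsq (central_commute _ _) hnilsum, ih, ← mul_assoc]
    congr 1

lemma gexp_sum_coe {ι : Type*} [DecidableEq ι] (T : Finset ι) (c : ι → Ce m)
    (hc : ∀ s, c s * c s = 0) :
    gexp ((∑ s ∈ T, c s : Ce m) : Gr m) = ((∏ s ∈ T, (1 + c s) : Ce m) : Gr m) := by
  have h := gexp_sum_shift T c hc 0 ⟨1, pow_one (0 : Gr m)⟩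
  rw [add_zero, gexp_zero, mul_one] at h
  exact h

/-- The quadratic form `∑ ψ_i B_ij ψ̄_j`. -/
def Fmat (B : Matrix (Fin m) (Fin m) ℝ) : Gr m := ∑ i, ∑ j, B i j • q i j

lemma Fmat_eq_coe (B : Matrix (Fin m) (Fin m) ℝ) :
    Fmat B = ((∑ p : Fin m × Fin m, B p.1 p.2 • qc p.1 p.2 : Ce m) : Gr m) := by
  rw [AddSubmonoidClass.coe_finset_sum, Fintype.sum_prod_type]
  rfl

lemma Fmat_nilpotent (B : Matrix (Fin m) (Fin m) ℝ) : IsNilpotent (Fmat B) := by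
  rw [Fmat_eq_coe]
  refine coe_nilpotent (isNilpotent_sum fun p _ => ?_)
  refine sq_zero_nilpotent ?_
  rw [smul_mul_assoc, mul_smul_comm, qc_sq, smul_zero, smul_zero]

lemma berezin_gexp_Fmat (B : Matrix (Fin m) (Fin m) ℝ) :
    berezin m (gexp (Fmat B)) = algebraMap ℝ (Gr m) B.det := by
  rw [Fmat_eq_coe, gexp_sum_coe _ _ (fun p => by
    rw [smul_mul_assoc, mul_smul_comm, qc_sq, smul_zero, smul_zero]),
    berezin_gexp_core]


lemma incl_excl {R : Type*} [CommRing R] {n : ℕ} (u v : Fin n → R) :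
    ∑ S ∈ (Finset.univ : Finset (Fin n)).powerset,
        (-1 : R) ^ (n - S.card) * ((∏ β ∈ S, u β) * ∏ β ∈ Finset.univ \ S, v β)
      = ∏ β, (u β - v β) := by
  classical
  have h1 : ∀ β, u β - v β = u β + (-v β) := fun β => sub_eq_add_neg _ _
  rw [Finset.prod_congr rfl (fun β _ => h1 β), Finset.prod_add]
  refine Finset.sum_congr rfl fun S hS => ?_
  have h2 : ∏ β ∈ Finset.univ \ S, (-v β)
      = (-1 : R) ^ (n - S.card) * ∏ β ∈ Finset.univ \ S, v β := by
    have h3 : ∀ β, -v β = (-1 : R) * v β := fun β => by ring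
    rw [Finset.prod_congr rfl (fun β _ => h3 β), Finset.prod_mul_distrib, Finset.prod_const,
      Finset.card_sdiff_of_subset (Finset.mem_powerset.mp hS), Finset.card_univ, Fintype.card_fin]
  rw [h2]
  ring

lemma sum_S_prod {r : ℕ} (qs : Fin r → Ce m) :
    ∑ S ∈ (Finset.univ : Finset (Fin r)).powerset,
        (-1 : Ce m) ^ (r - S.card) * ∏ α ∈ S, (1 + qs α)
      = ∏ α, qs α := by
  have h := incl_excl (R := Ce m) (fun α => 1 + qs α) (fun _ => 1)
  simp only [Finset.prod_const_one, mul_one, add_sub_cancel_left] at h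
  exact h.trans (Finset.prod_congr rfl fun β _ => add_sub_cancel_left _ _)

section MatrixSide

variable {r : ℕ} (A : Matrix (Fin m) (Fin m) ℝ) (I J : Fin r → Fin m)

lemma mul_std_apply (M : Matrix (Fin m) (Fin m) ℝ) (a b k l : Fin m) :
    (M * Matrix.single a b (1:ℝ)) k l = if b = l then M k a else 0 := by
  rw [Matrix.mul_apply]
  simp only [Matrix.single, Matrix.of_apply, ite_and, mul_ite, mul_one, mul_zero]
  rw [Finset.sum_ite_eq]
  simp

lemma det_BS (hA : IsUnit A.det) (S : Finset (Fin r)) :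
    (A + ∑ α ∈ S, Matrix.single (I α) (J α) 1).det
      = A.det * Matrix.det (1 + Matrix.of (fun α β : Fin r =>
          if β ∈ S then A⁻¹ (J α) (I β) else 0)) := by
  classical
  set Us : Matrix (Fin m) (Fin r) ℝ :=
    Matrix.of (fun k α => if α ∈ S then A⁻¹ k (I α) else 0) with hUs
  set Vs : Matrix (Fin r) (Fin m) ℝ :=
    Matrix.of (fun α k => if J α = k then 1 else 0) with hVs
  have hUV : Us * Vs = A⁻¹ * (∑ α ∈ S, Matrix.single (I α) (J α) 1) := by
    ext k l
    rw [Matrix.mul_apply, Matrix.mul_sum, Matrix.sum_apply]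
    have hterm : ∀ α, Us k α * Vs α l
        = if α ∈ S then (if J α = l then A⁻¹ k (I α) else 0) else 0 := by
      intro α
      simp only [hUs, hVs, Matrix.of_apply]
      by_cases h1 : α ∈ S <;> by_cases h2 : J α = l <;> simp [h1, h2]
    rw [Finset.sum_congr rfl (fun α _ => hterm α), Finset.sum_ite_mem, Finset.univ_inter]
    exact Finset.sum_congr rfl fun α hα => (mul_std_apply A⁻¹ (I α) (J α) k l).symm
  have hVU : Vs * Us = Matrix.of (fun α β : Fin r =>
      if β ∈ S then A⁻¹ (J α) (I β) else 0) := by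
    ext α β
    rw [Matrix.mul_apply]
    simp only [hUs, hVs, Matrix.of_apply, ite_mul, one_mul, zero_mul]
    rw [Finset.sum_ite_eq Finset.univ (J α)
      (fun k => if β ∈ S then A⁻¹ k (I β) else 0)]
    simp
  have key : A + ∑ α ∈ S, Matrix.single (I α) (J α) 1 = A * (1 + Us * Vs) := by
    rw [Matrix.mul_add, Matrix.mul_one, hUV, ← Matrix.mul_assoc,
      Matrix.mul_nonsing_inv A hA, Matrix.one_mul]
  rw [key, Matrix.det_mul, Matrix.det_one_add_mul_comm, hVU]

lemma sum_det_BS (hA : IsUnit A.det) :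
    ∑ S ∈ (Finset.univ : Finset (Fin r)).powerset,
        (-1 : ℝ) ^ (r - S.card) * (A + ∑ α ∈ S, Matrix.single (I α) (J α) 1).det
      = A.det * Matrix.det (fun α β : Fin r => A⁻¹ (J β) (I α)) := by
  classical
  rw [Finset.sum_congr rfl (fun S _ => by rw [det_BS A I J hA S])]
  have pull : ∑ S ∈ (Finset.univ : Finset (Fin r)).powerset,
      (-1 : ℝ) ^ (r - S.card) * (A.det * Matrix.det (1 + Matrix.of (fun α β : Fin r =>
          if β ∈ S then A⁻¹ (J α) (I β) else 0)))
      = A.det * ∑ S ∈ (Finset.univ : Finset (Fin r)).powerset,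
          (-1 : ℝ) ^ (r - S.card) * Matrix.det (1 + Matrix.of (fun α β : Fin r =>
            if β ∈ S then A⁻¹ (J α) (I β) else 0)) := by
    rw [Finset.mul_sum]
    exact Finset.sum_congr rfl fun S _ => by ring
  rw [pull]
  congr 1
  have expand : ∀ S ∈ (Finset.univ : Finset (Fin r)).powerset,
      (-1 : ℝ) ^ (r - S.card) * Matrix.det (1 + Matrix.of (fun α β : Fin r =>
        if β ∈ S then A⁻¹ (J α) (I β) else 0))
      = ∑ σ : Equiv.Perm (Fin r), ((Equiv.Perm.sign σ : ℤ) : ℝ) *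
          ((-1 : ℝ) ^ (r - S.card) *
            ((∏ β ∈ S, ((if σ β = β then (1:ℝ) else 0) + A⁻¹ (J (σ β)) (I β))) *
             ∏ β ∈ Finset.univ \ S, (if σ β = β then (1:ℝ) else 0))) := by
    intro S hS
    rw [Matrix.det_apply', Finset.mul_sum]
    refine Finset.sum_congr rfl fun σ _ => ?_
    have hsp : ∏ β : Fin r, (1 + Matrix.of (fun α β : Fin r =>
          if β ∈ S then A⁻¹ (J α) (I β) else 0)) (σ β) β
        = (∏ β ∈ S, ((if σ β = β then (1:ℝ) else 0) + A⁻¹ (J (σ β)) (I β))) *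
          ∏ β ∈ Finset.univ \ S, (if σ β = β then (1:ℝ) else 0) := by
      rw [← Finset.prod_sdiff (Finset.mem_powerset.mp hS), mul_comm]
      congr 1
      · exact Finset.prod_congr rfl fun β hβ => by
          simp [Matrix.add_apply, Matrix.one_apply, hβ]
      · exact Finset.prod_congr rfl fun β hβ => by
          simp [Matrix.add_apply, Matrix.one_apply, (Finset.mem_sdiff.mp hβ).2]
    rw [hsp]
    ring
  rw [Finset.sum_congr rfl expand, Finset.sum_comm]
  have inner : ∀ σ : Equiv.Perm (Fin r),
      ∑ S ∈ (Finset.univ : Finset (Fin r)).powerset, ((Equiv.Perm.sign σ : ℤ) : ℝ) *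
          ((-1 : ℝ) ^ (r - S.card) *
            ((∏ β ∈ S, ((if σ β = β then (1:ℝ) else 0) + A⁻¹ (J (σ β)) (I β))) *
             ∏ β ∈ Finset.univ \ S, (if σ β = β then (1:ℝ) else 0)))
      = ((Equiv.Perm.sign σ : ℤ) : ℝ) * ∏ β : Fin r, A⁻¹ (J (σ β)) (I β) := by
    intro σ
    rw [← Finset.mul_sum,
      incl_excl (fun β => (if σ β = β then (1:ℝ) else 0) + A⁻¹ (J (σ β)) (I β))
        (fun β => if σ β = β then (1:ℝ) else 0)]
    congr 1
    exact Finset.prod_congr rfl fun β _ => by ring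
  rw [Finset.sum_congr rfl (fun σ _ => inner σ)]
  have htr : Matrix.det (fun α β : Fin r => A⁻¹ (J β) (I α))
      = Matrix.det (Matrix.transpose (Matrix.of fun α β : Fin r => A⁻¹ (J β) (I α))) := by
    rw [Matrix.det_transpose]
    rfl
  rw [htr, Matrix.det_apply']
  rfl

end MatrixSide


lemma Fmat_add (B C : Matrix (Fin m) (Fin m) ℝ) : Fmat (B + C) = Fmat B + Fmat C := by
  unfold Fmat
  rw [← Finset.sum_add_distrib]
  refine Finset.sum_congr rfl fun i _ => ?_
  rw [← Finset.sum_add_distrib]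
  refine Finset.sum_congr rfl fun j _ => ?_
  rw [Matrix.add_apply, add_smul]

lemma Fmat_zero : Fmat (0 : Matrix (Fin m) (Fin m) ℝ) = 0 := by
  unfold Fmat; simp

lemma Fmat_sum {ι : Type*} [DecidableEq ι] (T : Finset ι)
    (f : ι → Matrix (Fin m) (Fin m) ℝ) :
    Fmat (∑ α ∈ T, f α) = ∑ α ∈ T, Fmat (f α) := by
  classical
  induction T using Finset.induction_on with
  | empty => simpa using Fmat_zero
  | insert _ _ ha ih =>
    rename_i a T
    rw [Finset.sum_insert ha, Fmat_add, ih, Finset.sum_insert ha]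

lemma Fmat_std (a b : Fin m) : Fmat (Matrix.single a b 1) = q a b := by
  unfold Fmat
  have h1 : ∀ i j : Fin m, Matrix.single a b (1:ℝ) i j • q i j
      = (if b = j then (if a = i then q i j else 0) else 0) := by
    intro i j
    simp only [Matrix.single, Matrix.of_apply, ite_and, ite_smul, one_smul, zero_smul]
    by_cases h2 : a = i <;> by_cases h3 : b = j <;> simp [h2, h3]
  simp only [h1]
  rw [Finset.sum_congr rfl (fun i (_ : i ∈ Finset.univ) =>
    Finset.sum_ite_eq Finset.univ b (fun j => if a = i then q i j else 0))]
  simp only [Finset.mem_univ, if_true]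
  rw [Finset.sum_ite_eq Finset.univ a (fun i => q i b)]
  simp

section Assembly

variable {r : ℕ} (A : Matrix (Fin m) (Fin m) ℝ) (I J : Fin r → Fin m)

lemma gexp_FBS (S : Finset (Fin r)) :
    gexp (Fmat (A + ∑ α ∈ S, Matrix.single (I α) (J α) 1))
      = ((∏ α ∈ S, (1 + qc (I α) (J α)) : Ce m) : Gr m) * gexp (Fmat A) := by
  classical
  rw [Fmat_add, Fmat_sum]
  have hsum : (∑ α ∈ S, Fmat (Matrix.single (I α) (J α) (1:ℝ)))
      = ((∑ α ∈ S, qc (I α) (J α) : Ce m) : Gr m) := by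
    rw [AddSubmonoidClass.coe_finset_sum]
    exact Finset.sum_congr rfl fun α _ => Fmat_std _ _
  rw [hsum, add_comm]
  exact gexp_sum_shift S _ (fun α => qc_sq _ _) (Fmat A) (Fmat_nilpotent A)

lemma P_eq : ((List.finRange r).map (fun α => psi (I α) * psibar (J α))).prod
    = ((∏ α, qc (I α) (J α) : Ce m) : Gr m) := by
  rw [coe_prod_univ]
  rfl

lemma lhs_expand :
    ((List.finRange r).map (fun α => psi (I α) * psibar (J α))).prod * gexp (Fmat A)
      = ∑ S ∈ (Finset.univ : Finset (Fin r)).powerset,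
          algebraMap ℝ (Gr m) ((-1:ℝ) ^ (r - S.card)) *
            gexp (Fmat (A + ∑ α ∈ S, Matrix.single (I α) (J α) 1)) := by
  classical
  rw [P_eq]
  symm
  calc ∑ S ∈ (Finset.univ : Finset (Fin r)).powerset,
        algebraMap ℝ (Gr m) ((-1:ℝ) ^ (r - S.card)) *
          gexp (Fmat (A + ∑ α ∈ S, Matrix.single (I α) (J α) 1))
      = ∑ S ∈ (Finset.univ : Finset (Fin r)).powerset,
          (algebraMap ℝ (Gr m) ((-1:ℝ) ^ (r - S.card)) *
            ((∏ α ∈ S, (1 + qc (I α) (J α)) : Ce m) : Gr m)) * gexp (Fmat A) := by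
        refine Finset.sum_congr rfl fun S _ => ?_
        rw [gexp_FBS A I J S, mul_assoc]
    _ = (∑ S ∈ (Finset.univ : Finset (Fin r)).powerset,
          algebraMap ℝ (Gr m) ((-1:ℝ) ^ (r - S.card)) *
            ((∏ α ∈ S, (1 + qc (I α) (J α)) : Ce m) : Gr m)) * gexp (Fmat A) := by
        rw [Finset.sum_mul]
    _ = ((∑ S ∈ (Finset.univ : Finset (Fin r)).powerset,
          (-1 : Ce m) ^ (r - S.card) * ∏ α ∈ S, (1 + qc (I α) (J α)) : Ce m) : Gr m)
          * gexp (Fmat A) := by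
        congr 1
        rw [AddSubmonoidClass.coe_finset_sum]
        refine Finset.sum_congr rfl fun S _ => ?_
        have hneg : ((-1 : Ce m) ^ (r - S.card))
            = algebraMap ℝ (Ce m) ((-1:ℝ) ^ (r - S.card)) := by
          rw [map_pow, map_neg, map_one]
        rw [hneg]
        rfl
    _ = ((∏ α, qc (I α) (J α) : Ce m) : Gr m) * gexp (Fmat A) := by
        rw [sum_S_prod]

end Assembly


/-- **Wick's theorem for "complex" fermions, item 1**:
for invertible `A` and index sequences `I J : Fin r → Fin m`,
`(∏_i ∂_{ψ̄_i}∂_{ψ_i}) [ψ_{i_1}ψ̄_{j_1}⋯ψ_{i_r}ψ̄_{j_r}] exp(∑ ψ_i A_{ij} ψ̄_j)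
  = det A ⬝ det ((A⁻ᵀ)(i_α, j_β))_{α,β}`. -/
theorem berezin_wick_monomial (m r : ℕ) (A : Matrix (Fin m) (Fin m) ℝ)
    (hA : IsUnit A.det) (I J : Fin r → Fin m) :
    berezin m
        (((List.finRange r).map (fun α => psi (I α) * psibar (J α))).prod *
          gexp (∑ i, ∑ j, A i j • (psi i * psibar j))) =
      algebraMap ℝ (Gr m)
        (A.det * Matrix.det (fun α β : Fin r => A⁻¹ (J β) (I α))) := by
  classical
  have hF : (∑ i, ∑ j, A i j • (psi i * psibar j)) = Fmat A := rfl
  rw [hF, lhs_expand A I J, map_sum]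
  have hterm : ∀ S ∈ (Finset.univ : Finset (Fin r)).powerset,
      berezin m (algebraMap ℝ (Gr m) ((-1:ℝ) ^ (r - S.card)) *
        gexp (Fmat (A + ∑ α ∈ S, Matrix.single (I α) (J α) 1)))
      = algebraMap ℝ (Gr m) ((-1:ℝ) ^ (r - S.card) *
          (A + ∑ α ∈ S, Matrix.single (I α) (J α) 1).det) := by
    intro S _
    rw [← Algebra.smul_def, map_smul, berezin_gexp_Fmat, Algebra.smul_def, ← map_mul]
  rw [Finset.sum_congr rfl hterm, ← map_sum, sum_det_BS A I J hA]



end Fermion
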